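/- arXiv:1302.4885 — 8 statements merged into one kernel-verified Lean document; each statement's English description precedes it below -/
import Mathlib

section
/- For every t > 0, the integral over ℝ of |Γ(t+ix)|² dx equals 2π·Γ(2t)/4^t; equivalently, the function p_t(x) = (4^t/(2π·Γ(2t)))·|Γ(t+ix)|² is a probability density on ℝ. -/
/-!
Write `σ` for the logistic sigmoid. The substitution `u = σ s` turns the Beta integral
`B(z̄, z)` into `∫ e^{-i s Im z} (σ s (1 - σ s))^{Re z} ds`, and `Γ(z̄) Γ(z) = |Γ(z)|²`; so
`x ↦ |Γ(t + i x)|² / Γ(2t)` is, up to the scaling `x = 2πξ`, the Fourier transform of the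
integrable weight `(σ(1 - σ))^t`. Fourier inversion at the origin then identifies the integral
with the value of the weight at `0`, which is `4^{-t}` because `σ 0 = 1/2`. Integrability of
`|Γ(t + i x)|²` comes from `|Γ(z)| ≤ Γ(Re z)` and `Γ(z + 1) = z Γ(z)`.
-/

open MeasureTheory Complex Real
open scoped FourierTransform ComplexConjugate

theorem Real.integral_fourier_eq_of_continuousAt_zero {V E : Type*} [NormedAddCommGroup V]
    [InnerProductSpace ℝ V] [FiniteDimensional ℝ V] [MeasurableSpace V] [BorelSpace V]
    [NormedAddCommGroup E] [NormedSpace ℂ E] [CompleteSpace E] {f : V → E}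
    (hf : Integrable f) (hFf : Integrable (𝓕 f)) (h0 : ContinuousAt f 0) :
    ∫ ξ, 𝓕 f ξ = f 0 := by
  rw [← hf.fourierInv_fourier_eq hFf h0, Real.fourierInv_eq]
  simp

namespace Real

theorem one_sub_sigmoid_eq_sigmoid_mul_exp_neg (s : ℝ) : 1 - sigmoid s = sigmoid s * exp (-s) := by
  rw [← sigmoid_neg, sigmoid_mul_rexp_neg]

theorem log_one_sub_sigmoid (s : ℝ) : log (1 - sigmoid s) = log (sigmoid s) - s := by
  rw [one_sub_sigmoid_eq_sigmoid_mul_exp_neg, log_mul (sigmoid_pos s).ne' (exp_pos _).ne', log_exp]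
  ring

end Real

namespace Complex

theorem norm_Gamma_le_Gamma_re {z : ℂ} (hz : 0 < z.re) : ‖Gamma z‖ ≤ Real.Gamma z.re := by
  rw [Gamma_eq_integral hz, Real.Gamma_eq_integral hz]
  refine (norm_integral_le_integral_norm _).trans_eq <|
    setIntegral_congr_fun measurableSet_Ioi fun x hx => ?_
  rw [norm_mul, norm_real, Real.norm_of_nonneg (Real.exp_pos _).le,
    norm_cpow_eq_rpow_re_of_pos hx, sub_re, one_re]

theorem Gamma_mul_Gamma_conj (z : ℂ) : Gamma z * Gamma (conj z) = (‖Gamma z‖ ^ 2 : ℝ) := by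
  rw [Gamma_conj, mul_conj, normSq_eq_norm_sq]

theorem norm_Gamma_sq_le {z : ℂ} (hz : 0 < z.re) :
    ‖Gamma z‖ ^ 2 ≤ Real.Gamma (z.re + 1) ^ 2 / ‖z‖ ^ 2 := by
  have hz0 : z ≠ 0 := fun h => by simp [h] at hz
  have hrec : ‖z‖ * ‖Gamma z‖ ≤ Real.Gamma (z.re + 1) := by
    simpa [Gamma_add_one z hz0] using norm_Gamma_le_Gamma_re (z := z + 1) (by simp; linarith)
  rw [le_div_iff₀ (by positivity), ← mul_pow, mul_comm]
  exact pow_le_pow_left₀ (by positivity) hrec 2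

theorem continuous_Gamma_vertical {t : ℝ} (ht : 0 < t) :
    Continuous fun x : ℝ => Gamma (t + x * I) := by
  refine continuous_iff_continuousAt.2 fun x => ContinuousAt.comp ?_ (by fun_prop)
  refine (differentiableAt_Gamma _ fun m h => ?_).continuousAt
  have := congrArg re h
  simp at this
  linarith [m.cast_nonneg (α := ℝ)]

theorem integrable_norm_Gamma_sq_vertical {t : ℝ} (ht : 0 < t) :
    Integrable fun x : ℝ => ‖Gamma (t + x * I)‖ ^ 2 := by
  refine ((integrable_inv_one_add_sq.comp_div ht.ne').const_mul
    ((Real.Gamma (t + 1) / t) ^ 2)).mono'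
    ((continuous_Gamma_vertical ht).norm.pow 2).aestronglyMeasurable
    (Filter.Eventually.of_forall fun x => ?_)
  have hbound := norm_Gamma_sq_le (z := t + x * I) (by simpa using ht)
  rw [Real.norm_of_nonneg (by positivity)]
  convert hbound using 1
  have hre : (t + x * I : ℂ).re = t := by simp
  rw [hre, Complex.sq_norm, normSq_add_mul_I]
  field_simp

theorem abs_deriv_sigmoid_smul_cpow_mul_cpow (u v : ℂ) (s : ℝ) :
    |sigmoid s * (1 - sigmoid s)| • ((sigmoid s : ℂ) ^ (u - 1) * (1 - (sigmoid s : ℂ)) ^ (v - 1))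
      = (sigmoid s : ℂ) ^ u * (1 - (sigmoid s : ℂ)) ^ v := by
  have hp : (sigmoid s : ℂ) ≠ 0 := ofReal_ne_zero.2 (sigmoid_pos s).ne'
  have hq : 1 - (sigmoid s : ℂ) ≠ 0 := by
    rw [← ofReal_one, ← ofReal_sub, ofReal_ne_zero, sub_ne_zero]
    exact (sigmoid_lt_one s).ne'
  rw [abs_of_pos (mul_pos (sigmoid_pos s) (sub_pos.2 (sigmoid_lt_one s))), real_smul,
    cpow_sub _ _ hp, cpow_sub _ _ hq, cpow_one, cpow_one]
  push_cast
  field_simp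

open Set in
theorem betaIntegral_eq_integral_sigmoid (u v : ℂ) :
    betaIntegral u v = ∫ s : ℝ, (sigmoid s : ℂ) ^ u * (1 - (sigmoid s : ℂ)) ^ v := by
  rw [betaIntegral, intervalIntegral.integral_of_le zero_le_one, integral_Ioc_eq_integral_Ioo,
    ← range_sigmoid, ← image_univ, integral_image_eq_integral_abs_deriv_smul MeasurableSet.univ
      (fun s _ => (hasDerivAt_sigmoid s).hasDerivWithinAt) sigmoid_injective.injOn,
    setIntegral_univ]
  simp_rw [abs_deriv_sigmoid_smul_cpow_mul_cpow]

open Set in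
theorem integrable_sigmoid_cpow_mul_cpow {u v : ℂ} (hu : 0 < u.re) (hv : 0 < v.re) :
    Integrable fun s : ℝ => (sigmoid s : ℂ) ^ u * (1 - (sigmoid s : ℂ)) ^ v := by
  have h := betaIntegral_convergent hu hv
  rw [intervalIntegrable_iff_integrableOn_Ioo_of_le zero_le_one, ← range_sigmoid, ← image_univ,
    integrableOn_image_iff_integrableOn_abs_deriv_smul MeasurableSet.univ
      (fun s _ => (hasDerivAt_sigmoid s).hasDerivWithinAt) sigmoid_injective.injOn,
    integrableOn_univ] at h
  simpa only [abs_deriv_sigmoid_smul_cpow_mul_cpow] using h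

theorem sigmoid_cpow_conj_mul_one_sub_sigmoid_cpow (z : ℂ) (s : ℝ) :
    (sigmoid s : ℂ) ^ conj z * (1 - (sigmoid s : ℂ)) ^ z
      = exp (-(z.im * s) * I) * ((sigmoid s * (1 - sigmoid s)) ^ z.re : ℝ) := by
  have hp := sigmoid_pos s
  have hq : 0 < 1 - sigmoid s := sub_pos.2 (sigmoid_lt_one s)
  rw [← ofReal_one, ← ofReal_sub, cpow_def_of_ne_zero (ofReal_ne_zero.2 hp.ne'),
    cpow_def_of_ne_zero (ofReal_ne_zero.2 hq.ne'), ← ofReal_log hp.le, ← ofReal_log hq.le,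
    rpow_def_of_pos (mul_pos hp hq), ofReal_exp, ← Complex.exp_add, ← Complex.exp_add,
    Real.log_mul hp.ne' hq.ne', log_one_sub_sigmoid]
  congr 1
  apply Complex.ext <;> simp <;> ring

theorem betaIntegral_conj_self {z : ℂ} (hz : 0 < z.re) :
    betaIntegral (conj z) z = (‖Gamma z‖ ^ 2 / Real.Gamma (2 * z.re) : ℝ) := by
  have hsum : conj z + z = (2 * z.re : ℝ) := by
    rw [add_comm, add_conj]
  have hΓ : (Real.Gamma (2 * z.re) : ℂ) ≠ 0 :=
    ofReal_ne_zero.2 (Real.Gamma_pos_of_pos (by linarith)).ne'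
  have h := Gamma_mul_Gamma_eq_betaIntegral (s := conj z) (t := z) (by simpa using hz) hz
  rw [hsum, Gamma_ofReal, mul_comm, Gamma_mul_Gamma_conj] at h
  rw [ofReal_div, eq_div_iff hΓ, h, mul_comm]

end Complex

theorem fourier_sigmoid_mul_one_sub_sigmoid_rpow {t : ℝ} (ht : 0 < t) (ξ : ℝ) :
    𝓕 (fun s : ℝ => (((sigmoid s * (1 - sigmoid s)) ^ t : ℝ) : ℂ)) ξ
      = ((‖Gamma (t + (2 * π * ξ : ℝ) * I)‖ ^ 2 / Real.Gamma (2 * t) : ℝ) : ℂ) := by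
  have hre : (t + (2 * π * ξ : ℝ) * I : ℂ).re = t := by simp
  have him : (t + (2 * π * ξ : ℝ) * I : ℂ).im = 2 * π * ξ := by simp
  have h := betaIntegral_conj_self (z := t + (2 * π * ξ : ℝ) * I) (by rwa [hre])
  simp only [betaIntegral_eq_integral_sigmoid, sigmoid_cpow_conj_mul_one_sub_sigmoid_cpow, hre,
    him] at h
  rw [Real.fourier_real_eq_integral_exp_smul, ← h]
  congr 1 with s
  rw [smul_eq_mul]
  congr 3
  push_cast
  ring

theorem integral_norm_Gamma_sq_two_pi_mul_div {t : ℝ} (ht : 0 < t) :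
    ∫ ξ : ℝ, ‖Gamma (t + (2 * π * ξ : ℝ) * I)‖ ^ 2 / Real.Gamma (2 * t) = ((4 : ℝ) ^ t)⁻¹ := by
  set W : ℝ → ℂ := fun s => (((sigmoid s * (1 - sigmoid s)) ^ t : ℝ) : ℂ)
  have hW : Integrable W := by
    have h := integrable_sigmoid_cpow_mul_cpow (u := t) (v := t) (by simpa) (by simpa)
    convert h using 2 with s
    simpa using (sigmoid_cpow_conj_mul_one_sub_sigmoid_cpow t s).symm
  have hFW : Integrable (𝓕 W) := by
    rw [funext (fourier_sigmoid_mul_one_sub_sigmoid_rpow ht)]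
    exact (((integrable_norm_Gamma_sq_vertical ht).comp_mul_left' (by positivity)).div_const
      _).ofReal
  have hW0 : ContinuousAt W 0 :=
    (continuous_ofReal.comp ((continuous_sigmoid.mul (continuous_const.sub
      continuous_sigmoid)).rpow_const fun _ => Or.inr ht.le)).continuousAt
  have h := Real.integral_fourier_eq_of_continuousAt_zero hW hFW hW0
  simp only [W, fourier_sigmoid_mul_one_sub_sigmoid_rpow ht, integral_complex_ofReal] at h
  rw [ofReal_inj.1 h, sigmoid_zero, ← inv_rpow (by norm_num)]
  norm_num

/-- For every `t > 0`, `∫_ℝ |Γ(t+ix)|² dx = 2π·Γ(2t)/4^t`. -/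
theorem meixner_density_integral (t : ℝ) (ht : 0 < t) :
    ∫ x : ℝ, ‖Complex.Gamma ((t : ℂ) + (x : ℂ) * Complex.I)‖ ^ 2
      = 2 * Real.pi * Real.Gamma (2 * t) / (4 : ℝ) ^ t := by
  have h := integral_norm_Gamma_sq_two_pi_mul_div ht
  rw [integral_div, Measure.integral_comp_mul_left
    (fun x : ℝ => ‖Complex.Gamma ((t : ℂ) + (x : ℂ) * Complex.I)‖ ^ 2)] at h
  rw [abs_of_pos (by positivity), smul_eq_mul] at h
  field_simp at h
  rw [eq_div_iff (by positivity), h]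
end

section
/- For every t > 0 and every real z, the characteristic function of the symmetric Meixner distribution satisfies ∫_ℝ e^{izx} p_t(x) dx = (1/cosh(z/2))^{2t}. -/
open MeasureTheory

/-- The density of the symmetric Meixner distribution `ρ_t`. -/
noncomputable def meixnerDensity (t x : ℝ) : ℝ :=
  (4 : ℝ) ^ t / (2 * Real.pi * Real.Gamma (2 * t)) *
    ‖Complex.Gamma ((t : ℂ) + (x : ℂ) * Complex.I)‖ ^ 2

/-!
Substituting `u = σ(s)` (the logistic sigmoid) in Euler's Beta integral gives
`B(a, b) = ∫ e^{(a - b) s / 2} (2 cosh (s / 2))^{-(a + b)} ds`. Taking `a = t - ix`, `b = t + ix`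
in `Γ(a) Γ(b) = Γ(2t) B(a, b)` shows that `2π p_t(x)` is the Fourier transform of
`sech (s / 2) ^ (2t)` at `x / 2π`. Both functions are integrable (`Γ(s + 1) = s Γ(s)` gives
`|Γ(t + ix)|² = O(1 / x²)`), so Fourier inversion returns `sech (z / 2) ^ (2t)` as the
characteristic function of `p_t`.
-/

open Real Set FourierTransform
open scoped Complex

lemma Real.sigmoid_eq_exp_div_two_cosh (s : ℝ) :
    sigmoid s = rexp (s / 2) / (2 * cosh (s / 2)) := by
  rw [sigmoid_def, cosh_eq]
  field_simp
  rw [add_mul, one_mul, ← Real.exp_add]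
  ring_nf

lemma Real.log_sigmoid (s : ℝ) : log (sigmoid s) = s / 2 - log (2 * cosh (s / 2)) := by
  rw [sigmoid_eq_exp_div_two_cosh, log_div (exp_pos _).ne' (by positivity), log_exp]

lemma Complex.ofReal_cpow_eq_exp_log {x : ℝ} (hx : 0 < x) (w : ℂ) :
    (x : ℂ) ^ w = cexp (Real.log x * w) := by
  rw [cpow_def_of_ne_zero (ofReal_ne_zero.mpr hx.ne'), ofReal_log hx.le]

lemma abs_deriv_sigmoid_smul_betaIntegrand (a b : ℂ) (s : ℝ) :
    |sigmoid s * (1 - sigmoid s)| •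
        ((sigmoid s : ℂ) ^ (a - 1) * (1 - (sigmoid s : ℂ)) ^ (b - 1))
      = cexp ((a - b) / 2 * s) * ((2 * cosh (s / 2) : ℝ) : ℂ) ^ (-(a + b)) := by
  have hp := sigmoid_pos s
  have hq : 0 < 1 - sigmoid s := sigmoid_neg s ▸ sigmoid_pos (-s)
  have hlogq : log (1 - sigmoid s) = -s / 2 - log (2 * cosh (s / 2)) := by
    rw [← sigmoid_neg, log_sigmoid, neg_div, cosh_neg]
  rw [abs_of_pos (mul_pos hp hq), ← exp_log (mul_pos hp hq), log_mul hp.ne' hq.ne',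
    ← Complex.ofReal_one, ← Complex.ofReal_sub, Complex.ofReal_cpow_eq_exp_log hp,
    Complex.ofReal_cpow_eq_exp_log hq, Complex.ofReal_cpow_eq_exp_log (by positivity),
    Complex.real_smul, Complex.ofReal_exp, ← Complex.exp_add, ← Complex.exp_add,
    ← Complex.exp_add, hlogq, log_sigmoid]
  congr 1
  push_cast
  ring

theorem Complex.betaIntegral_eq_integral_cosh (a b : ℂ) :
    betaIntegral a b
      = ∫ s : ℝ,
          cexp ((a - b) / 2 * s) * ((2 * Real.cosh (s / 2) : ℝ) : ℂ) ^ (-(a + b)) := by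
  have key := integral_image_eq_integral_abs_deriv_smul MeasurableSet.univ
    (fun s _ => (hasDerivAt_sigmoid s).hasDerivWithinAt) sigmoid_injective.injOn
    (fun u : ℝ => (u : ℂ) ^ (a - 1) * (1 - (u : ℂ)) ^ (b - 1))
  rw [image_univ, range_sigmoid, Measure.restrict_univ] at key
  rw [betaIntegral, intervalIntegral.integral_of_le zero_le_one, integral_Ioc_eq_integral_Ioo,
    key]
  simp only [abs_deriv_sigmoid_smul_betaIntegrand]

theorem Complex.integrable_cosh_betaIntegrand {a b : ℂ} (ha : 0 < a.re) (hb : 0 < b.re) :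
    Integrable fun s : ℝ =>
      cexp ((a - b) / 2 * s) * ((2 * Real.cosh (s / 2) : ℝ) : ℂ) ^ (-(a + b)) := by
  have key := integrableOn_image_iff_integrableOn_abs_deriv_smul MeasurableSet.univ
    (fun s _ => (hasDerivAt_sigmoid s).hasDerivWithinAt) sigmoid_injective.injOn
    (fun u : ℝ => (u : ℂ) ^ (a - 1) * (1 - (u : ℂ)) ^ (b - 1))
  rw [image_univ, range_sigmoid, integrableOn_univ] at key
  simp only [abs_deriv_sigmoid_smul_betaIntegrand] at key
  rw [← key, ← integrableOn_Ioc_iff_integrableOn_Ioo]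
  exact (betaIntegral_convergent ha hb).1

lemma Complex.norm_Gamma_le_Gamma_re_s2 {s : ℂ} (hs : 0 < s.re) :
    ‖Gamma s‖ ≤ Real.Gamma s.re := by
  rw [Gamma_eq_integral hs, GammaIntegral, Real.Gamma_eq_integral hs]
  refine (norm_integral_le_integral_norm _).trans_eq <| setIntegral_congr_fun measurableSet_Ioi ?_
  intro x hx
  dsimp only
  rw [norm_mul, norm_real, Real.norm_of_nonneg (exp_pos _).le, norm_cpow_eq_rpow_re_of_pos hx,
    sub_re, one_re]

lemma Complex.norm_Gamma_sq_mul_one_add_im_sq_le {s : ℂ} (hs : 0 < s.re) :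
    ‖Gamma s‖ ^ 2 * (1 + s.im ^ 2) ≤ Real.Gamma s.re ^ 2 + Real.Gamma (s.re + 1) ^ 2 := by
  have hs0 : s ≠ 0 := fun h => by simp [h] at hs
  have hΓ : ‖Gamma s‖ ≤ Real.Gamma s.re := norm_Gamma_le_Gamma_re_s2 hs
  have hΓ₁ : ‖Gamma s‖ * ‖s‖ ≤ Real.Gamma (s.re + 1) := by
    rw [mul_comm, ← norm_mul, ← Gamma_add_one s hs0]
    simpa using norm_Gamma_le_Gamma_re_s2 (s := s + 1) (by simp; linarith)
  have him : s.im ^ 2 ≤ ‖s‖ ^ 2 := sq_le_sq.2 <| (abs_im_le_norm s).trans_eq (abs_norm s).symm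
  have := norm_nonneg (Gamma s)
  nlinarith [pow_le_pow_left₀ this hΓ 2, pow_le_pow_left₀ (by positivity) hΓ₁ 2,
    mul_le_mul_of_nonneg_left him (sq_nonneg ‖Gamma s‖)]

lemma Complex.continuousAt_Gamma_of_re_pos {s : ℂ} (hs : 0 < s.re) : ContinuousAt Gamma s :=
  continuousAt_Gamma s fun m h => by
    have := congrArg re h
    simp at this
    linarith [(m.cast_nonneg : (0 : ℝ) ≤ m)]

theorem Complex.integrable_norm_Gamma_sq {σ : ℝ} (hσ : 0 < σ) :
    Integrable fun x : ℝ => ‖Gamma (σ + x * I)‖ ^ 2 := by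
  have hre (x : ℝ) : (σ + x * I : ℂ).re = σ := by simp
  have hcont : Continuous fun x : ℝ => Gamma (σ + x * I) :=
    continuous_iff_continuousAt.2 fun x =>
      (continuousAt_Gamma_of_re_pos ((hre x).symm ▸ hσ)).comp (by fun_prop)
  refine (integrable_inv_one_add_sq.const_mul
    (Real.Gamma σ ^ 2 + Real.Gamma (σ + 1) ^ 2)).mono' (hcont.norm.pow 2).aestronglyMeasurable
    (Filter.Eventually.of_forall fun x => ?_)
  have h := norm_Gamma_sq_mul_one_add_im_sq_le ((hre x).symm ▸ hσ)
  rw [hre, show (σ + x * I : ℂ).im = x by simp] at h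
  rw [Real.norm_of_nonneg (by positivity), ← div_eq_mul_inv, le_div_iff₀ (by positivity)]
  exact h

noncomputable def sechPow (t s : ℝ) : ℝ := (1 / cosh (s / 2)) ^ (2 * t)

lemma two_cosh_cpow_neg (t s : ℝ) :
    ((2 * cosh (s / 2) : ℝ) : ℂ) ^ (-((2 * t : ℝ) : ℂ))
      = (((4 : ℝ) ^ t)⁻¹ * sechPow t s : ℝ) := by
  have hc := cosh_pos (s / 2)
  rw [← Complex.ofReal_neg, ← Complex.ofReal_cpow (by positivity), Complex.ofReal_inj, sechPow,
    rpow_neg (by positivity), mul_rpow zero_le_two hc.le, one_div, inv_rpow hc.le, mul_inv,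
    show (4 : ℝ) = 2 ^ (2 : ℝ) by norm_num, ← rpow_mul zero_le_two]

lemma continuous_sechPow (t : ℝ) : Continuous (sechPow t) :=
  (continuous_const.div (by fun_prop) fun s => (cosh_pos _).ne').rpow_const
    fun s => Or.inl (one_div_pos.2 (cosh_pos _)).ne'

lemma integrable_sechPow {t : ℝ} (ht : 0 < t) : Integrable fun s => (sechPow t s : ℂ) := by
  refine ((Complex.integrable_cosh_betaIntegrand (a := t) (b := t) (by simpa) (by simpa)).const_mul
      (((4 : ℝ) ^ t : ℝ) : ℂ)).congr (Filter.Eventually.of_forall fun s => ?_)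
  have h4 : (((4 : ℝ) ^ t : ℝ) : ℂ) ≠ 0 := by
    exact_mod_cast (rpow_pos_of_pos four_pos t).ne'
  dsimp only
  rw [sub_self, zero_div, zero_mul, Complex.exp_zero, one_mul,
    show (t + t : ℂ) = ((2 * t : ℝ) : ℂ) by push_cast; ring, two_cosh_cpow_neg]
  push_cast
  field_simp

theorem norm_Gamma_sq_eq_fourier_sechPow {t : ℝ} (ht : 0 < t) (x : ℝ) :
    ((‖Complex.Gamma (t + x * Complex.I)‖ ^ 2 : ℝ) : ℂ)
      = Real.Gamma (2 * t) * ((4 : ℝ) ^ t)⁻¹ *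
          𝓕 (fun s => (sechPow t s : ℂ)) (x / (2 * π)) := by
  set a : ℂ := t + x * Complex.I
  have ha : 0 < a.re := by simpa [a]
  have hconj : (starRingEnd ℂ) a = t - x * Complex.I := by
    simp [a, Complex.conj_ofReal, sub_eq_add_neg]
  rw [← Complex.normSq_eq_norm_sq, Complex.normSq_eq_conj_mul_self, ← Complex.Gamma_conj, hconj,
    Complex.Gamma_mul_Gamma_eq_betaIntegral (by simpa) ha, Complex.betaIntegral_eq_integral_cosh,
    show t - x * Complex.I + a = ((2 * t : ℝ) : ℂ) by push_cast; ring, Complex.Gamma_ofReal,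
    Real.fourier_real_eq_integral_exp_smul, mul_assoc]
  simp only [← integral_const_mul]
  congr 1
  funext s
  have hexp : (t - x * Complex.I - a) / 2 * s
      = ((-2 * π * s * (x / (2 * π)) : ℝ) : ℂ) * Complex.I := by
    push_cast
    field_simp
    ring
  rw [two_cosh_cpow_neg, smul_eq_mul, hexp]
  push_cast
  ring

theorem meixnerDensity_eq_fourier_sechPow {t : ℝ} (ht : 0 < t) (x : ℝ) :
    (meixnerDensity t x : ℂ)
      = (2 * π : ℂ)⁻¹ * 𝓕 (fun s => (sechPow t s : ℂ)) (x / (2 * π)) := by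
  have hΓ : (Real.Gamma (2 * t) : ℂ) ≠ 0 := by
    exact_mod_cast (Gamma_pos_of_pos (by positivity)).ne'
  have h4 : (((4 : ℝ) ^ t : ℝ) : ℂ) ≠ 0 := by
    exact_mod_cast (rpow_pos_of_pos four_pos t).ne'
  have hπ : (π : ℂ) ≠ 0 := by exact_mod_cast pi_ne_zero
  rw [meixnerDensity, Complex.ofReal_mul, norm_Gamma_sq_eq_fourier_sechPow ht]
  push_cast
  field_simp

lemma integrable_meixnerDensity {t : ℝ} (ht : 0 < t) : Integrable (meixnerDensity t) :=
  (Complex.integrable_norm_Gamma_sq ht).const_mul _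

lemma integrable_fourier_sechPow {t : ℝ} (ht : 0 < t) :
    Integrable (𝓕 fun s => (sechPow t s : ℂ)) := by
  have h : (𝓕 fun s => (sechPow t s : ℂ))
      = fun ξ => (2 * π : ℂ) * meixnerDensity t (2 * π * ξ) := by
    funext ξ
    rw [meixnerDensity_eq_fourier_sechPow ht, mul_div_cancel_left₀ _ two_pi_pos.ne']
    field_simp
  rw [h]
  exact (((integrable_meixnerDensity ht).ofReal (𝕜 := ℂ)).comp_mul_left'
    two_pi_pos.ne').const_mul _

/-- For `t > 0` and real `z`, the characteristic function of the symmetric Meixner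
distribution is `∫_ℝ e^{izx} p_t(x) dx = (1/cosh(z/2))^{2t}`. -/
theorem meixner_charFun (t : ℝ) (ht : 0 < t) (z : ℝ) :
    ∫ x : ℝ, Complex.exp (Complex.I * (z : ℂ) * (x : ℂ)) * (meixnerDensity t x : ℂ)
      = (((1 / Real.cosh (z / 2)) ^ (2 * t) : ℝ) : ℂ) := by
  have hinv := (integrable_sechPow ht).fourierInv_fourier_eq (integrable_fourier_sechPow ht)
    (Complex.continuous_ofReal.comp (continuous_sechPow t) |>.continuousAt (x := z))
  rw [Real.fourierInv_eq'] at hinv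
  set h : ℝ → ℂ := fun ξ => cexp (↑(2 * π * inner ℝ ξ z) * Complex.I) •
    𝓕 (fun s => (sechPow t s : ℂ)) ξ
  calc _ = ∫ x : ℝ, (2 * π)⁻¹ • h (x / (2 * π)) := by
        refine integral_congr_ae (Filter.Eventually.of_forall fun x => ?_)
        have hphase : (↑(2 * π * inner ℝ (x / (2 * π)) z) * Complex.I : ℂ)
            = Complex.I * z * x := by
          rw [Real.inner_apply]
          push_cast
          field_simp
        simp only [h]
        rw [hphase, meixnerDensity_eq_fourier_sechPow ht, Complex.real_smul, smul_eq_mul]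
        push_cast
        ring
    _ = _ := by
        rw [integral_smul, Measure.integral_comp_div, smul_smul, abs_of_pos two_pi_pos,
          inv_mul_cancel₀ two_pi_pos.ne', one_smul, hinv, sechPow]
end

section
/- For every t > 0, the function x ↦ |Γ(t+ix)|² is strictly decreasing on [0, ∞); in particular its derivative at every x > 0 is strictly negative (it equals −2|Γ(t+ix)|²·Σ_{n=0}^∞ x/((t+n)²+x²)). -/
/-!
Gauss's limit formula `Γ(s) = lim n^s n! / ∏_{j ≤ n} (s + j)`, taken in absolute value, gives
`|Γ(t+ix)|² / Γ(t)² = ∏_n (1 + x²/(t+n)²)⁻¹ = exp (-∑_n log (1 + x²/(t+n)²))`.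
On every bounded interval the termwise derivatives `2x/((t+n)²+x²)` are dominated by a multiple
of `1/(t+n)²`, so the series may be differentiated termwise; the resulting derivative is negative
for `x > 0`, and the mean value theorem gives strict antitonicity on `[0, ∞)`.
-/

open Filter Topology Finset

theorem summable_inv_add_sq (t : ℝ) : Summable fun n : ℕ => ((t + n) ^ 2)⁻¹ := by
  simpa [Real.rpow_two, add_comm] using
    (Real.summable_one_div_nat_add_rpow t 2).mpr one_lt_two

theorem abs_div_sq_add_sq_le {a : ℝ} (ha : a ≠ 0) (y : ℝ) :
    |y / (a ^ 2 + y ^ 2)| ≤ |y| * (a ^ 2)⁻¹ := by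
  have ha2 : 0 < a ^ 2 := by positivity
  rw [abs_div, abs_of_pos (by positivity : 0 < a ^ 2 + y ^ 2), ← div_eq_mul_inv]
  gcongr
  exact le_add_of_nonneg_right (sq_nonneg y)

theorem summable_log_one_add_sq_div (t x : ℝ) :
    Summable fun n : ℕ => Real.log (1 + x ^ 2 / (t + n) ^ 2) := by
  refine ((summable_inv_add_sq t).mul_left (x ^ 2)).of_nonneg_of_le
    (fun n => Real.log_nonneg (by simp only [le_add_iff_nonneg_right]; positivity)) fun n => ?_
  calc Real.log (1 + x ^ 2 / (t + n) ^ 2) ≤ 1 + x ^ 2 / (t + n) ^ 2 - 1 :=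
        Real.log_le_sub_one_of_pos (by positivity)
    _ = x ^ 2 * ((t + n) ^ 2)⁻¹ := by ring

theorem summable_div_add_sq_add_sq {t : ℝ} (ht : ∀ n : ℕ, t + n ≠ 0) (x : ℝ) :
    Summable fun n : ℕ => x / ((t + n) ^ 2 + x ^ 2) :=
  .of_norm_bounded ((summable_inv_add_sq t).mul_left |x|) fun n => abs_div_sq_add_sq_le (ht n) x

theorem tsum_div_add_sq_add_sq_pos {t : ℝ} (ht : ∀ n : ℕ, t + n ≠ 0) {x : ℝ} (hx : 0 < x) :
    0 < ∑' n : ℕ, x / ((t + n) ^ 2 + x ^ 2) :=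
  (summable_div_add_sq_add_sq ht x).tsum_pos (fun n => by positivity) 0 (by positivity)

theorem hasDerivAt_log_one_add_sq_div {a : ℝ} (ha : a ≠ 0) (y : ℝ) :
    HasDerivAt (fun y => Real.log (1 + y ^ 2 / a ^ 2)) (2 * (y / (a ^ 2 + y ^ 2))) y := by
  have ha2 : 0 < a ^ 2 := by positivity
  convert (((hasDerivAt_pow 2 y).div_const (a ^ 2)).const_add 1).log (by positivity) using 1
  field_simp
  ring

theorem hasDerivAt_tsum_log_one_add_sq_div {t : ℝ} (ht : ∀ n : ℕ, t + n ≠ 0) (x : ℝ) :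
    HasDerivAt (fun y => ∑' n : ℕ, Real.log (1 + y ^ 2 / (t + n) ^ 2))
      (2 * ∑' n : ℕ, x / ((t + n) ^ 2 + x ^ 2)) x := by
  set R := |x| + 1
  rw [← tsum_mul_left]
  refine hasDerivAt_tsum_of_isPreconnected (u := fun n : ℕ => 2 * R * ((t + n) ^ 2)⁻¹)
    ((summable_inv_add_sq t).mul_left _) isOpen_Ioo (convex_Ioo (-R) R).isPreconnected
    (fun n y _ => hasDerivAt_log_one_add_sq_div (ht n) y) (fun n y hy => ?_) (y₀ := 0)
    (abs_lt.mp (by simp only [abs_zero]; positivity)) (by simp) (abs_lt.mp (by simp [R]))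
  rw [norm_mul, Real.norm_eq_abs, abs_two, mul_assoc]
  gcongr
  refine (abs_div_sq_add_sq_le (ht n) y).trans ?_
  gcongr
  exact (abs_lt.mpr hy).le

namespace Complex

theorem sq_norm_ofReal_div_norm_add_mul_I {a : ℝ} (ha : a ≠ 0) (x : ℝ) :
    (‖(a : ℂ)‖ / ‖a + x * I‖) ^ 2 = Real.exp (-Real.log (1 + x ^ 2 / a ^ 2)) := by
  have ha2 : 0 < a ^ 2 := by positivity
  rw [Real.exp_neg, Real.exp_log (by positivity), div_pow, Complex.sq_norm,
    Complex.sq_norm, normSq_ofReal, normSq_add_mul_I]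
  field_simp

theorem norm_GammaSeq (s : ℂ) {n : ℕ} (hn : n ≠ 0) :
    ‖GammaSeq s n‖ = n ^ s.re * n.factorial / ∏ j ∈ range (n + 1), ‖s + j‖ := by
  rw [GammaSeq, norm_div, norm_mul, norm_natCast_cpow_of_pos (Nat.pos_of_ne_zero hn), norm_prod,
    norm_natCast]

theorem norm_GammaSeq_div_norm_GammaSeq_re (s : ℂ) {n : ℕ} (hn : n ≠ 0) :
    ‖GammaSeq s n‖ / ‖GammaSeq s.re n‖ = ∏ j ∈ range (n + 1), ‖(s.re : ℂ) + j‖ / ‖s + j‖ := by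
  rw [norm_GammaSeq s hn, norm_GammaSeq _ hn, ofReal_re, prod_div_distrib,
    div_div_div_cancel_left' _ _ (by positivity)]

theorem tendsto_prod_norm_re_add_div_norm_add (s : ℂ) (hs : Gamma s.re ≠ 0) :
    Tendsto (fun n => ∏ j ∈ range (n + 1), ‖(s.re : ℂ) + j‖ / ‖s + j‖) atTop
      (𝓝 (‖Gamma s‖ / ‖Gamma s.re‖)) :=
  ((GammaSeq_tendsto_Gamma s).norm.div (GammaSeq_tendsto_Gamma _).norm
    (norm_ne_zero_iff.mpr hs)).congr'
    ((eventually_ne_atTop 0).mono fun _ hn => norm_GammaSeq_div_norm_GammaSeq_re s hn)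

theorem norm_Gamma_add_mul_I_sq {t : ℝ} (ht : ∀ n : ℕ, t + n ≠ 0) (x : ℝ) :
    ‖Gamma (t + x * I)‖ ^ 2 =
      Real.Gamma t ^ 2 * Real.exp (-∑' n : ℕ, Real.log (1 + x ^ 2 / (t + n) ^ 2)) := by
  have hΓ : Gamma t ≠ 0 :=
    Gamma_ne_zero fun m hm => ht m <| ofReal_injective <| by push_cast; rw [hm]; ring
  have hre : (t + x * I : ℂ).re = t := by simp
  have hprod := tendsto_prod_norm_re_add_div_norm_add (t + x * I) (by rwa [hre])
  rw [hre] at hprod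
  have hexp := ((summable_log_one_add_sq_div t x).hasSum.tendsto_sum_nat.comp
    (tendsto_add_atTop_nat 1)).neg.rexp
  have hlim := tendsto_nhds_unique (hprod.pow 2) <| hexp.congr fun n => by
    simp only [Function.comp_apply, ← sum_neg_distrib, Real.exp_sum, ← prod_pow]
    refine prod_congr rfl fun j _ => ?_
    rw [← sq_norm_ofReal_div_norm_add_mul_I (by exact_mod_cast ht j)]
    push_cast
    rw [add_right_comm]
  rw [← hlim, div_pow, Gamma_ofReal, norm_real, Real.norm_eq_abs, sq_abs,
    mul_div_cancel₀ _ (pow_ne_zero 2 (by simpa [Gamma_ofReal] using hΓ))]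

theorem hasDerivAt_norm_Gamma_add_mul_I_sq {t : ℝ} (ht : ∀ n : ℕ, t + n ≠ 0) (x : ℝ) :
    HasDerivAt (fun x : ℝ => ‖Gamma (t + x * I)‖ ^ 2)
      (-2 * ‖Gamma (t + x * I)‖ ^ 2 * ∑' n : ℕ, x / ((t + n) ^ 2 + x ^ 2)) x := by
  simp only [norm_Gamma_add_mul_I_sq ht]
  exact ((hasDerivAt_tsum_log_one_add_sq_div ht x).fun_neg.exp.const_mul _).congr_deriv (by ring)

end Complex

/-- For every `t > 0`, the function `x ↦ |Γ(t+ix)|²` is strictly decreasing on `[0,∞)`;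
moreover, for every `x > 0` its derivative equals
`−2|Γ(t+ix)|²·∑_{n=0}^∞ x/((t+n)²+x²)`, which is strictly negative. -/
theorem meixner_density_strictAnti (t : ℝ) (ht : 0 < t) :
    StrictAntiOn (fun x : ℝ =>
        ‖Complex.Gamma ((t : ℂ) + (x : ℂ) * Complex.I)‖ ^ 2) (Set.Ici 0) ∧
    ∀ x : ℝ, 0 < x →
      HasDerivAt (fun x : ℝ =>
          ‖Complex.Gamma ((t : ℂ) + (x : ℂ) * Complex.I)‖ ^ 2)
        (-2 * ‖Complex.Gamma ((t : ℂ) + (x : ℂ) * Complex.I)‖ ^ 2 *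
          ∑' n : ℕ, x / ((t + n) ^ 2 + x ^ 2)) x ∧
      -2 * ‖Complex.Gamma ((t : ℂ) + (x : ℂ) * Complex.I)‖ ^ 2 *
          (∑' n : ℕ, x / ((t + n) ^ 2 + x ^ 2)) < 0 := by
  have ht' : ∀ n : ℕ, t + n ≠ 0 := fun n => by positivity
  have hderiv := Complex.hasDerivAt_norm_Gamma_add_mul_I_sq ht'
  have hneg : ∀ x : ℝ, 0 < x → -2 * ‖Complex.Gamma (t + x * Complex.I)‖ ^ 2 *
      (∑' n : ℕ, x / ((t + n) ^ 2 + x ^ 2)) < 0 := fun x hx => by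
    have hΓ : 0 < ‖Complex.Gamma (t + x * Complex.I)‖ :=
      norm_pos_iff.mpr (Complex.Gamma_ne_zero_of_re_pos (by simpa))
    exact mul_neg_of_neg_of_pos (mul_neg_of_neg_of_pos (by norm_num) (pow_pos hΓ 2))
      (tsum_div_add_sq_add_sq_pos ht' hx)
  refine ⟨strictAntiOn_of_deriv_neg (convex_Ici 0)
    (fun x _ => (hderiv x).continuousAt.continuousWithinAt) fun x hx => ?_,
    fun x hx => ⟨hderiv x, hneg x hx⟩⟩
  rw [interior_Ici] at hx
  rw [(hderiv x).deriv]
  exact hneg x hx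
end

section
/- Let p : ℝ → ℝ be a nonnegative continuously differentiable probability density (∫_ℝ p(x) dx = 1) such that p(−x) = p(x) for all x, p′(x) ≤ 0 for all x > 0, and p(x)·log x → 0 as x → +∞. Then for all real x > 0 and y > 0, the real part of the Cauchy transform is strictly positive: Re ∫_ℝ p(u)/((x + yi) − u) du > 0. -/
/-!
Write `z = x + yi` and `s = |z|²`. Since `p` is even, `Re G(z) = ½ ∫ p(u) k(u) du` with
`k(u) = Re (1/(z - u) + 1/(z + u)) = 2x(s - u²) / (|z - u|² |z + u|²)`. The kernel `k` is
integrable with `∫ k = 0`, being the derivative of `½ log (|z + u|² / |z - u|²)`, which vanishes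
at `±∞`. Moreover `k(u)` has the sign of `s - u²`, and so has `p(u) - p(√s)` because `p` is even
and nonincreasing in `|u|`. Hence `∫ p k = ∫ (p - p(√s)) k > 0`, strictly because a probability
density on `ℝ` cannot be constant.
-/

open MeasureTheory Filter Topology Bornology

lemma tendsto_sq_add_div_sq (a b : ℝ) :
    Tendsto (fun t : ℝ => ((t + a) ^ 2 + b) / t ^ 2) (cobounded ℝ) (𝓝 1) := by
  have hcont : Continuous fun ε : ℝ => (1 + a * ε) ^ 2 + b * ε ^ 2 := by fun_prop
  have h0 : Tendsto (fun ε : ℝ => (1 + a * ε) ^ 2 + b * ε ^ 2) (𝓝 0) (𝓝 1) := by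
    simpa using hcont.tendsto 0
  refine (h0.comp tendsto_inv₀_cobounded).congr' ?_
  filter_upwards [eventually_ne_cobounded (0 : ℝ)] with t ht
  simp only [Function.comp_apply]
  field_simp

lemma tendsto_log_sq_add_sub_log_sq (a b : ℝ) :
    Tendsto (fun t : ℝ => Real.log ((t + a) ^ 2 + b) - Real.log (t ^ 2)) (cobounded ℝ) (𝓝 0) := by
  have hratio := tendsto_sq_add_div_sq a b
  refine (Real.log_one ▸ ((Real.continuousAt_log one_ne_zero).tendsto.comp hratio)).congr' ?_
  filter_upwards [hratio.eventually_ne one_ne_zero] with t ht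
  exact Real.log_div (div_ne_zero_iff.mp ht).1 (div_ne_zero_iff.mp ht).2

/-- `Re (1/(z - u) + 1/(z + u))` for `z = x + yi`. -/
noncomputable def symmCauchyKernel (x y u : ℝ) : ℝ :=
  2 * x * (x ^ 2 + y ^ 2 - u ^ 2) / (((x - u) ^ 2 + y ^ 2) * ((x + u) ^ 2 + y ^ 2))

section SymmCauchyKernel

variable {x y : ℝ}

lemma div_add_div_neg_eq_symmCauchyKernel (hy : y ≠ 0) (u : ℝ) :
    (x - u) / ((x - u) ^ 2 + y ^ 2) + (x - -u) / ((x - -u) ^ 2 + y ^ 2) =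
      symmCauchyKernel x y u := by
  rw [symmCauchyKernel, sub_neg_eq_add]
  field_simp
  ring

lemma continuous_symmCauchyKernel (hy : y ≠ 0) : Continuous (symmCauchyKernel x y) := by
  unfold symmCauchyKernel
  exact Continuous.div (by fun_prop) (by fun_prop) fun u => by positivity

lemma hasDerivAt_log_div_symmCauchyKernel (hy : y ≠ 0) (u : ℝ) :
    HasDerivAt (fun t => (Real.log ((t + x) ^ 2 + y ^ 2) - Real.log ((t + -x) ^ 2 + y ^ 2)) / 2)
      (symmCauchyKernel x y u) u := by
  have h1 : HasDerivAt (fun t => (t + x) ^ 2 + y ^ 2) (2 * (u + x)) u := by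
    simpa using (((hasDerivAt_id u).add_const x).pow 2).add_const (y ^ 2)
  have h2 : HasDerivAt (fun t => (t + -x) ^ 2 + y ^ 2) (2 * (u + -x)) u := by
    simpa using (((hasDerivAt_id u).add_const (-x)).pow 2).add_const (y ^ 2)
  refine (((h1.log (by positivity)).sub (h2.log (by positivity))).div_const 2).congr_deriv ?_
  unfold symmCauchyKernel
  field_simp
  ring

lemma abs_symmCauchyKernel_le (hx : 0 ≤ x) (hy : y ≠ 0) (u : ℝ) :
    |symmCauchyKernel x y u| ≤ 2 * x * (x ^ 2 + y ^ 2 + 1) / y ^ 2 * (1 + u ^ 2)⁻¹ := by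
  set s := x ^ 2 + y ^ 2
  set D := ((x - u) ^ 2 + y ^ 2) * ((x + u) ^ 2 + y ^ 2)
  have hs : 0 < s := by positivity
  have hD : y ^ 2 * (s + u ^ 2) ^ 2 / s ≤ D := by
    have : s * D = y ^ 2 * (s + u ^ 2) ^ 2 + x ^ 2 * (s - u ^ 2) ^ 2 := by ring
    rw [div_le_iff₀ hs]
    nlinarith [sq_nonneg (x * (s - u ^ 2))]
  have hnum : |s - u ^ 2| ≤ s + u ^ 2 := by
    rw [abs_le]; constructor <;> nlinarith [sq_nonneg u]
  calc |symmCauchyKernel x y u| = 2 * x * |s - u ^ 2| / D := by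
        rw [symmCauchyKernel, abs_div, abs_mul, abs_of_nonneg (by positivity : (0 : ℝ) ≤ 2 * x),
          abs_of_pos (by positivity : 0 < D)]
    _ ≤ 2 * x * (s + u ^ 2) / (y ^ 2 * (s + u ^ 2) ^ 2 / s) := by gcongr
    _ = 2 * x / y ^ 2 * (s / (s + u ^ 2)) := by field_simp
    _ ≤ 2 * x / y ^ 2 * ((s + 1) / (1 + u ^ 2)) := by
        refine mul_le_mul_of_nonneg_left ?_ (by positivity)
        rw [div_le_div_iff₀ (by positivity) (by positivity)]
        nlinarith [sq_nonneg u]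
    _ = 2 * x * (s + 1) / y ^ 2 * (1 + u ^ 2)⁻¹ := by ring

lemma integrable_symmCauchyKernel (hx : 0 ≤ x) (hy : y ≠ 0) :
    Integrable (symmCauchyKernel x y) :=
  (integrable_inv_one_add_sq.const_mul _).mono'
    (continuous_symmCauchyKernel hy).aestronglyMeasurable
    (Eventually.of_forall fun u => abs_symmCauchyKernel_le hx hy u)

lemma integral_symmCauchyKernel (hx : 0 ≤ x) (hy : y ≠ 0) :
    ∫ u, symmCauchyKernel x y u = 0 := by
  have hlim := ((tendsto_log_sq_add_sub_log_sq x (y ^ 2)).sub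
    (tendsto_log_sq_add_sub_log_sq (-x) (y ^ 2))).div_const 2
  simp only [sub_sub_sub_cancel_right, sub_zero, zero_div] at hlim
  simpa using integral_of_hasDerivAt_of_tendsto (hasDerivAt_log_div_symmCauchyKernel hy)
    (integrable_symmCauchyKernel hx hy) (hlim.mono_left IsOrderBornology.atBot_le_cobounded)
    (hlim.mono_left IsOrderBornology.atTop_le_cobounded)

lemma integrable_mul_symmCauchyKernel {p : ℝ → ℝ} (hp : Integrable p) (hx : 0 ≤ x)
    (hy : y ≠ 0) : Integrable fun u => p u * symmCauchyKernel x y u := by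
  have hbdd (u : ℝ) : ‖symmCauchyKernel x y u‖ ≤ 2 * x * (x ^ 2 + y ^ 2 + 1) / y ^ 2 :=
    (abs_symmCauchyKernel_le hx hy u).trans (mul_le_of_le_one_right (by positivity)
      (inv_le_one_of_one_le₀ (by nlinarith [sq_nonneg u])))
  simpa only [mul_comm] using
    hp.bdd_mul (continuous_symmCauchyKernel hy).aestronglyMeasurable (.of_forall hbdd)

lemma mul_symmCauchyKernel_nonneg (hx : 0 ≤ x) {a u : ℝ}
    (h : 0 ≤ a * (x ^ 2 + y ^ 2 - u ^ 2)) : 0 ≤ a * symmCauchyKernel x y u := by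
  rw [symmCauchyKernel, mul_div_assoc', mul_left_comm]
  positivity

lemma symmCauchyKernel_ne_zero (hx : x ≠ 0) (hy : y ≠ 0) {u : ℝ}
    (hu : u ^ 2 ≠ x ^ 2 + y ^ 2) : symmCauchyKernel x y u ≠ 0 :=
  div_ne_zero (mul_ne_zero (mul_ne_zero two_ne_zero hx) (sub_ne_zero.mpr hu.symm))
    (by positivity)

end SymmCauchyKernel

lemma Function.Even.apply_abs {α β : Type*} [AddGroup α] [LinearOrder α] {f : α → β}
    (hf : f.Even) (a : α) : f |a| = f a := by
  rcases abs_choice a with h | h <;> rw [h]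
  exact hf a

lemma AntitoneOn.sub_apply_sqrt_mul_sub_sq_nonneg {f : ℝ → ℝ} (hf : AntitoneOn f (Set.Ici 0))
    (heven : f.Even) (s u : ℝ) : 0 ≤ (f u - f √s) * (s - u ^ 2) := by
  rw [← heven.apply_abs]
  rcases le_total (u ^ 2) s with h | h
  · exact mul_nonneg
      (sub_nonneg.mpr (hf (abs_nonneg u) (Real.sqrt_nonneg s) (Real.abs_le_sqrt h)))
      (sub_nonneg.mpr h)
  · exact mul_nonneg_of_nonpos_of_nonpos
      (sub_nonpos.mpr (hf (Real.sqrt_nonneg s) (abs_nonneg u)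
        (Real.sqrt_sq_eq_abs u ▸ Real.sqrt_le_sqrt h)))
      (sub_nonpos.mpr h)

lemma integral_mul_add_comp_neg {p f : ℝ → ℝ} (hp : p.Even)
    (hf : Integrable fun u => p u * f u) :
    ∫ u, p u * (f u + f (-u)) = 2 * ∫ u, p u * f u := by
  have hp_neg : ∀ u, p (-u) = p u := hp
  have hf' : Integrable fun u => p u * f (-u) := by simpa [hp_neg] using hf.comp_neg
  have hswap : ∫ u, p u * f (-u) = ∫ u, p u * f u := by
    simpa [hp_neg] using integral_neg_eq_self (fun u => p u * f u) volume
  simp only [mul_add]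
  rw [integral_add hf hf', hswap, two_mul]

lemma integral_mul_pos_of_integral_eq_zero {α : Type*} [TopologicalSpace α] [MeasurableSpace α]
    [OpensMeasurableSpace α] {μ : Measure α} [μ.IsOpenPosMeasure] {f g : α → ℝ} {c : ℝ} {a : α}
    (hf : Continuous f) (hg : Continuous g) (hgi : Integrable g μ) (hg0 : ∫ u, g u ∂μ = 0)
    (hfg : Integrable (fun u => f u * g u) μ) (hnonneg : ∀ u, 0 ≤ (f u - c) * g u)
    (ha : (f a - c) * g a ≠ 0) : 0 < ∫ u, f u * g u ∂μ := by
  have hsplit : (fun u => (f u - c) * g u) = fun u => f u * g u - c * g u := by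
    ext u; ring
  have hshift : ∫ u, (f u - c) * g u ∂μ = ∫ u, f u * g u ∂μ := by
    rw [hsplit, integral_sub hfg (hgi.const_mul c), integral_const_mul, hg0, mul_zero, sub_zero]
  rw [← hshift]
  exact integral_pos_of_integrable_nonneg_nonzero (by fun_prop)
    (hsplit ▸ hfg.sub (hgi.const_mul c)) hnonneg ha

lemma integrable_ofReal_div_sub {p : ℝ → ℝ} (hp : Integrable p) {z : ℂ} (hz : z.im ≠ 0) :
    Integrable fun u : ℝ => (p u : ℂ) / (z - u) := by
  have hbound : ∀ u : ℝ, ‖(z - u)⁻¹‖ ≤ |z.im|⁻¹ := by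
    intro u
    rw [norm_inv]
    refine inv_anti₀ (abs_pos.mpr hz) ?_
    simpa using Complex.abs_im_le_norm (z - u)
  simpa [div_eq_inv_mul] using
    hp.ofReal.bdd_mul (c := |z.im|⁻¹) (by fun_prop) (Eventually.of_forall hbound)

lemma re_ofReal_div_sub (a x y u : ℝ) :
    ((a : ℂ) / (x + y * Complex.I - u)).re = a * ((x - u) / ((x - u) ^ 2 + y ^ 2)) := by
  simp [Complex.div_re, Complex.normSq, sq, mul_div_assoc]

lemma integrable_mul_sub_div_sq_add_sq {p : ℝ → ℝ} (hp : Integrable p) (x : ℝ) {y : ℝ}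
    (hy : y ≠ 0) : Integrable fun u => p u * ((x - u) / ((x - u) ^ 2 + y ^ 2)) := by
  simpa only [RCLike.re_to_complex, re_ofReal_div_sub] using
    (integrable_ofReal_div_sub hp (z := x + y * Complex.I) (by simpa using hy)).re

lemma re_integral_ofReal_div_sub {p : ℝ → ℝ} (hp : Integrable p) (x : ℝ) {y : ℝ} (hy : y ≠ 0) :
    (∫ u : ℝ, (p u : ℂ) / (x + y * Complex.I - u)).re =
      ∫ u, p u * ((x - u) / ((x - u) ^ 2 + y ^ 2)) := by
  have hint := integrable_ofReal_div_sub hp (z := x + y * Complex.I) (by simpa using hy)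
  simpa only [RCLike.re_to_complex, re_ofReal_div_sub] using (integral_re hint).symm

theorem cauchy_re_pos_of_symm_decreasing_general (p : ℝ → ℝ)
    (hsmooth : ContDiff ℝ 1 p)
    (hprob : ∫ x : ℝ, p x = 1)
    (hsymm : ∀ x : ℝ, p (-x) = p x)
    (hdecr : ∀ x : ℝ, 0 < x → deriv p x ≤ 0) :
    ∀ x y : ℝ, 0 < x → 0 < y →
      0 < (∫ u : ℝ, (p u : ℂ) / (((x : ℂ) + (y : ℂ) * Complex.I) - (u : ℂ))).re := by
  intro x y hx hy
  have hp : Integrable p := .of_integral_ne_zero (by simp [hprob])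
  have hanti : AntitoneOn p (Set.Ici 0) :=
    antitoneOn_of_deriv_nonpos (convex_Ici 0) hsmooth.continuous.continuousOn
      (hsmooth.differentiable one_ne_zero).differentiableOn (by simpa using hdecr)
  obtain ⟨a, ha⟩ : ∃ a, p a ≠ p √(x ^ 2 + y ^ 2) := by
    by_contra! hconst
    rw [show p = fun _ => p √(x ^ 2 + y ^ 2) from funext hconst] at hprob
    simp [measureReal_def] at hprob
  have ha_sq : a ^ 2 ≠ x ^ 2 + y ^ 2 := fun h =>
    ha (by rw [← Function.Even.apply_abs hsymm, ← Real.sqrt_sq_eq_abs, h])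
  rw [re_integral_ofReal_div_sub hp x hy.ne', ← mul_pos_iff_of_pos_left two_pos,
    ← integral_mul_add_comp_neg hsymm (integrable_mul_sub_div_sq_add_sq hp x hy.ne')]
  simp only [div_add_div_neg_eq_symmCauchyKernel hy.ne']
  exact integral_mul_pos_of_integral_eq_zero hsmooth.continuous
    (continuous_symmCauchyKernel hy.ne') (integrable_symmCauchyKernel hx.le hy.ne')
    (integral_symmCauchyKernel hx.le hy.ne') (integrable_mul_symmCauchyKernel hp hx.le hy.ne')
    (fun u => mul_symmCauchyKernel_nonneg hx.le (hanti.sub_apply_sqrt_mul_sub_sq_nonneg hsymm _ u))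
    (mul_ne_zero (sub_ne_zero.mpr ha) (symmCauchyKernel_ne_zero hx.ne' hy.ne' ha_sq))

/-- If `p` is a nonnegative, continuously differentiable probability density which is
symmetric, nonincreasing on `(0,∞)`, and satisfies `p(x)·log x → 0` as `x → ∞`, then the
Cauchy transform has strictly positive real part at every point `x + yi` with `x, y > 0`. -/
theorem cauchy_re_pos_of_symm_decreasing (p : ℝ → ℝ)
    (hsmooth : ContDiff ℝ 1 p)
    (hnonneg : ∀ x : ℝ, 0 ≤ p x)
    (hprob : ∫ x : ℝ, p x = 1)
    (hsymm : ∀ x : ℝ, p (-x) = p x)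
    (hdecr : ∀ x : ℝ, 0 < x → deriv p x ≤ 0)
    (hlim : Filter.Tendsto (fun x : ℝ => p x * Real.log x) Filter.atTop (nhds 0)) :
    ∀ x y : ℝ, 0 < x → 0 < y →
      0 < (∫ u : ℝ, (p u : ℂ) / (((x : ℂ) + (y : ℂ) * Complex.I) - (u : ℂ))).re :=
  cauchy_re_pos_of_symm_decreasing_general p hsmooth hprob hsymm hdecr
end

section
/- For every real x ≠ 0, Σ_{n=0}^∞ (x² − n²)/(x² + n²)² = (1/2)·(1/x² + (π/sinh(πx))²). -/
/-!
Differentiating the Mittag-Leffler expansion of `π cot (π z)` gives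
`∑_{n ∈ ℤ} 1 / (z + n)² = π² / sin² (π z)` for `Im z > 0`. At `z = i x` the left side has real
part `∑_{n ∈ ℤ} (n² - x²) / (x² + n²)²` and the right side equals `-π² / sinh² (π x)`. The summand
is even in `n`, so the sum over `ℕ` is half the sum over `ℤ` plus half the term `n = 0`, which
is `1 / x²`.
-/

open Complex
open scoped Real

theorem HasSum.nat_of_even {α : Type*} [DivisionSemiring α] [TopologicalSpace α]
    [IsTopologicalSemiring α] [NeZero (2 : α)] {f : ℤ → α} {a : α} (hf : f.Even)
    (h : HasSum f a) : HasSum (fun n : ℕ ↦ f n) ((a + f 0) / 2) := by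
  simpa only [hf _, add_self_div_two] using h.nat_add_neg.div_const 2

namespace Complex

theorem re_inv_sq_add_mul_I (a b : ℝ) :
    (((a : ℂ) + b * I) ^ 2)⁻¹.re = (a ^ 2 - b ^ 2) / (a ^ 2 + b ^ 2) ^ 2 := by
  rw [inv_re, map_pow, normSq_add_mul_I]
  simp [pow_two]

theorem hasDerivAt_pi_mul_cot_pi_mul {z : ℂ} (hz : sin (π * z) ≠ 0) :
    HasDerivAt (fun w : ℂ ↦ π * cot (π * w)) (-(π ^ 2 / sin (π * z) ^ 2)) z := by
  have hcot : HasDerivAt cot (-1 / sin (π * z) ^ 2) (π * z) := by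
    rw [show cot = fun w ↦ cos w / sin w from funext cot_eq_cos_div_sin]
    refine ((hasDerivAt_cos _).div (hasDerivAt_sin _) hz).congr_deriv ?_
    rw [← sin_sq_add_cos_sq (π * z)]
    ring
  refine ((hcot.comp z ((hasDerivAt_id z).const_mul (π : ℂ))).const_mul (π : ℂ)).congr_deriv ?_
  ring

theorem hasSum_one_div_add_int_sq {z : ℂ} (hz : 0 < z.im) :
    HasSum (fun n : ℤ ↦ 1 / (z + n) ^ 2) (π ^ 2 / sin (π * z) ^ 2) := by
  have hsin := sin_pi_mul_ne_zero (UpperHalfPlane.coe_mem_integerComplement ⟨z, hz⟩)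
  have hsum : Summable fun n : ℤ ↦ 1 / (z + n) ^ 2 := by
    simpa using EisensteinSeries.linear_right_summable z 1 (k := 2) le_rfl
  have h := iteratedDerivWithin_cot_pi_mul_eq_mul_tsum_div_pow le_rfl hz
  rw [iteratedDerivWithin_one, derivWithin_of_isOpen UpperHalfPlane.isOpen_upperHalfPlaneSet hz,
    (hasDerivAt_pi_mul_cot_pi_mul hsin).deriv] at h
  convert hsum.hasSum using 1
  simpa using h

end Complex

theorem hasSum_int_sq_sub_div_sq_add_sq {x : ℝ} (hx : x ≠ 0) :
    HasSum (fun n : ℤ ↦ (x ^ 2 - (n : ℝ) ^ 2) / (x ^ 2 + (n : ℝ) ^ 2) ^ 2)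
      ((π / Real.sinh (π * x)) ^ 2) := by
  wlog hpos : 0 < x generalizing x
  · have h := this (neg_ne_zero.mpr hx) (neg_pos.mpr ((not_lt.mp hpos).lt_of_ne hx))
    simpa only [neg_sq, mul_neg, Real.sinh_neg, div_neg] using h
  have hterm (n : ℤ) : -(1 / ((x : ℂ) * I + n) ^ 2).re
      = (x ^ 2 - (n : ℝ) ^ 2) / (x ^ 2 + (n : ℝ) ^ 2) ^ 2 := by
    rw [one_div, add_comm, ← ofReal_intCast, re_inv_sq_add_mul_I]
    ring
  have hsin : sin (π * (x * I)) ^ 2 = -((Real.sinh (π * x) ^ 2 : ℝ) : ℂ) := by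
    rw [show (π : ℂ) * (x * I) = (π * x : ℝ) * I by push_cast; ring, sin_mul_I, mul_pow, I_sq]
    push_cast
    ring
  have hvalue : -((π : ℂ) ^ 2 / sin (π * (x * I)) ^ 2).re = (π / Real.sinh (π * x)) ^ 2 := by
    rw [hsin, div_neg, neg_re, neg_neg, ← ofReal_pow, ← ofReal_div, ofReal_re, div_pow]
  have h := (hasSum_re (hasSum_one_div_add_int_sq (z := x * I) (by simpa using hpos))).neg
  simpa only [hterm, hvalue] using h

/-- For every real `x ≠ 0`,
`∑_{n=0}^∞ (x² − n²)/(x² + n²)² = (1/2)·(1/x² + (π/sinh(πx))²)`. -/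
theorem sum_sq_sub_div_sq_add_sq (x : ℝ) (hx : x ≠ 0) :
    ∑' n : ℕ, (x ^ 2 - (n : ℝ) ^ 2) / (x ^ 2 + (n : ℝ) ^ 2) ^ 2
      = (1 / 2) * (1 / x ^ 2 + (Real.pi / Real.sinh (Real.pi * x)) ^ 2) := by
  have h := (hasSum_int_sq_sub_div_sq_add_sq hx).nat_of_even fun n ↦ by
    simp only [Int.cast_neg, neg_sq]
  simp only [Int.cast_natCast, Int.cast_zero] at h
  rw [h.tsum_eq]
  have : x ^ 2 ≠ 0 := by positivity
  field_simp
  ring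
end

section
/- For every real x ≠ 0, the imaginary part of the series extension of the logistic Cauchy transform evaluated on the line Im z = −1/2 is strictly positive: Im Σ_{n=1}^∞ i/((x − i/2) + (n − 1/2)i)² = Σ_{n=0}^∞ (x² − n²)/(x² + n²)² > 0. -/
/-!
Differentiating the Mittag-Leffler expansion of `π cot (π z)` gives
`∑_{n ∈ ℤ} 1 / (z + n)² = π² / sin² (π z)` on the upper half plane. At `z = i y` this reads
`∑_{n ∈ ℤ} (y² - n²) / (y² + n²)² = π² / sinh² (π y)` after taking real parts, so folding the sum
over `ℤ` onto `ℕ` gives `∑_{n ∈ ℕ} (y² - n²) / (y² + n²)² = (1 / y² + π² / sinh² (π y)) / 2 > 0`.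
On the line `Im z = -1/2` the `n`-th term of the extension is `i / (x + n i)²`, whose imaginary
part is the `n`-th term of that series.
-/

open Complex
open scoped Real

lemma Complex.hasDerivAt_cot {z : ℂ} (h : sin z ≠ 0) : HasDerivAt cot (-1 / sin z ^ 2) z := by
  rw [show cot = fun w => cos w / sin w from funext cot_eq_cos_div_sin]
  refine ((hasDerivAt_cos z).fun_div (hasDerivAt_sin z) h).congr_deriv ?_
  rw [← sin_sq_add_cos_sq z]
  ring

lemma hasDerivAt_pi_mul_cot {z : ℂ} (h : sin (π * z) ≠ 0) :
    HasDerivAt (fun w => π * cot (π * w)) (-π ^ 2 / sin (π * z) ^ 2) z :=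
  (((hasDerivAt_cot h).comp z ((hasDerivAt_id z).const_mul (π : ℂ))).const_mul
    (π : ℂ)).congr_deriv (by ring)

lemma tsum_int_one_div_add_sq {z : ℂ} (hz : 0 < z.im) :
    ∑' n : ℤ, 1 / (z + n) ^ 2 = π ^ 2 / sin (π * z) ^ 2 := by
  have h := iteratedDerivWithin_cot_pi_mul_eq_mul_tsum_div_pow le_rfl hz
  have hsin : sin (π * z) ≠ 0 :=
    sin_pi_mul_ne_zero (UpperHalfPlane.coe_mem_integerComplement ⟨z, hz⟩)
  rw [iteratedDerivWithin_one, derivWithin_of_isOpen UpperHalfPlane.isOpen_upperHalfPlaneSet hz,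
    (hasDerivAt_pi_mul_cot hsin).deriv] at h
  norm_num [one_div] at h ⊢
  linear_combination h

lemma tsum_int_one_div_mul_I_add_sq {y : ℝ} (hy : 0 < y) :
    ∑' n : ℤ, 1 / (y * I + n) ^ 2 = -((π ^ 2 / Real.sinh (π * y) ^ 2 : ℝ) : ℂ) := by
  rw [tsum_int_one_div_add_sq (by simpa using hy), ← mul_assoc, sin_mul_I]
  push_cast
  ring_nf
  simp [I_sq]

lemma re_one_div_add_mul_I_sq (a b : ℝ) :
    (1 / ((a : ℂ) + b * I) ^ 2).re = (a ^ 2 - b ^ 2) / (a ^ 2 + b ^ 2) ^ 2 := by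
  rw [one_div, inv_re, map_pow, normSq_add_mul_I, sq ((a : ℂ) + b * I)]
  simp [mul_re]
  ring

lemma hasSum_int_sq_sub_sq_div_sq_add_sq_sq {y : ℝ} (hy : 0 < y) :
    HasSum (fun n : ℤ => (y ^ 2 - n ^ 2) / (y ^ 2 + n ^ 2) ^ 2)
      (π ^ 2 / Real.sinh (π * y) ^ 2) := by
  have hsum := tsum_int_one_div_mul_I_add_sq hy
  have hpos : 0 < π ^ 2 / Real.sinh (π * y) ^ 2 := by
    have : 0 < Real.sinh (π * y) := Real.sinh_pos_iff.mpr (by positivity)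
    positivity
  -- a series that is not summable has `tsum` zero
  have hs : Summable fun n : ℤ => 1 / (y * I + n) ^ 2 := by
    by_contra h
    rw [tsum_eq_zero_of_not_summable h, eq_comm, neg_eq_zero, ofReal_eq_zero] at hsum
    exact hpos.ne' hsum
  have hre := (hasSum_re hs.hasSum).neg
  rw [hsum, neg_re, ofReal_re, neg_neg] at hre
  refine hre.congr_fun fun n => ?_
  rw [show (y : ℂ) * I + n = ((n : ℝ) : ℂ) + y * I by push_cast; ring,
    re_one_div_add_mul_I_sq]
  ring

lemma hasSum_nat_sq_sub_sq_div_sq_add_sq_sq {y : ℝ} (hy : y ≠ 0) :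
    HasSum (fun n : ℕ => (y ^ 2 - n ^ 2) / (y ^ 2 + n ^ 2) ^ 2)
      ((1 / y ^ 2 + π ^ 2 / Real.sinh (π * y) ^ 2) / 2) := by
  have h := (hasSum_int_sq_sub_sq_div_sq_add_sq_sq (abs_pos.mpr hy)).nat_add_neg
  simp only [sq_abs, Int.cast_neg, Int.cast_natCast, neg_sq, ← two_mul] at h
  rw [show π * |y| = |π * y| by rw [abs_mul, abs_of_pos Real.pi_pos], ← Real.abs_sinh,
    sq_abs] at h
  have hval : (1 / y ^ 2 + π ^ 2 / Real.sinh (π * y) ^ 2) / 2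
      = (π ^ 2 / Real.sinh (π * y) ^ 2
          + (y ^ 2 - (0 : ℕ) ^ 2) / (y ^ 2 + (0 : ℕ) ^ 2) ^ 2) / 2 := by
    field_simp
    ring
  rw [hval]
  exact (h.div_const 2).congr_fun fun n => by ring

lemma summable_I_div_add_mul_I_sq (x : ℝ) :
    Summable fun n : ℕ => I / ((x : ℂ) + (n : ℝ) * I) ^ 2 := by
  refine .of_norm_bounded_eventually_nat (Real.summable_one_div_nat_pow.mpr one_lt_two) ?_
  filter_upwards [Filter.eventually_ge_atTop 1] with n hn
  have hn' : (0 : ℝ) < n := by exact_mod_cast hn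
  have him : (n : ℝ) ≤ ‖(x : ℂ) + n * I‖ := by
    simpa [abs_of_pos hn'] using abs_im_le_norm ((x : ℂ) + n * I)
  rw [norm_div, norm_I, norm_pow, ofReal_natCast]
  gcongr

/-- For every real `x ≠ 0`, the imaginary part of the series extension of the logistic
Cauchy transform on the line `Im z = −1/2` equals `∑_{n=0}^∞ (x² − n²)/(x² + n²)²`,
which is strictly positive. -/
theorem logistic_extension_im_pos (x : ℝ) (hx : x ≠ 0) :
    (∑' n : ℕ, Complex.I /
        (((x : ℂ) - Complex.I / 2) + ((n : ℂ) + 1 / 2) * Complex.I) ^ 2).im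
      = (∑' n : ℕ, (x ^ 2 - (n : ℝ) ^ 2) / (x ^ 2 + (n : ℝ) ^ 2) ^ 2) ∧
    0 < ∑' n : ℕ, (x ^ 2 - (n : ℝ) ^ 2) / (x ^ 2 + (n : ℝ) ^ 2) ^ 2 := by
  have hS := hasSum_nat_sq_sub_sq_div_sq_add_sq_sq hx
  have hshift : ∀ n : ℕ, ((x : ℂ) - I / 2) + ((n : ℂ) + 1 / 2) * I = x + (n : ℝ) * I := by
    intro n
    push_cast
    ring
  refine ⟨?_, hS.tsum_eq ▸ by positivity⟩
  simp_rw [hshift]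
  rw [im_tsum (summable_I_div_add_mul_I_sq x)]
  refine tsum_congr fun n => ?_
  rw [← mul_one_div, I_mul_im, re_one_div_add_mul_I_sq]
end

section
/- For every z ∈ ℂ with Re z > 0 and Im z ≥ −1/2, the real part of the series extension of the logistic Cauchy transform is strictly positive: Re Σ_{n=1}^∞ i/(z + (n − 1/2)i)² > 0. -/
/-!
The series is summable for every `z`, since its terms are `-I / (n + 1/2 - I z) ^ 2`. Writing
`w = z + (n + 1/2) I`, one has `Re (I / w ^ 2) = 2 Re w Im w / |w| ^ 4`; here `Re w = Re z > 0` and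
`Im w = Im z + n + 1/2 ≥ 0`, so every term has nonnegative real part, and the term `n = 1` has
strictly positive real part.
-/

open Complex

theorem Complex.re_tsum_pos {ι : Type*} {f : ι → ℂ} (hf : Summable f)
    (hnonneg : ∀ i, 0 ≤ (f i).re) (i : ι) (hi : 0 < (f i).re) : 0 < (∑' i, f i).re := by
  rw [re_tsum hf]
  exact (reCLM.summable hf).tsum_pos hnonneg i hi

theorem Complex.re_I_div_sq (w : ℂ) : (I / w ^ 2).re = 2 * w.re * w.im / normSq w ^ 2 := by
  simp only [sq, div_re, I_re, mul_re, zero_mul, map_mul, zero_div, I_im, mul_im, one_mul, zero_add]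
  ring

theorem Complex.re_I_div_sq_nonneg {w : ℂ} (hre : 0 ≤ w.re) (him : 0 ≤ w.im) :
    0 ≤ (I / w ^ 2).re := by
  rw [re_I_div_sq]
  positivity

theorem Complex.re_I_div_sq_pos {w : ℂ} (hre : 0 < w.re) (him : 0 < w.im) :
    0 < (I / w ^ 2).re := by
  have hw : w ≠ 0 := fun h => hre.ne' (by simp [h])
  rw [re_I_div_sq]
  have := normSq_pos.mpr hw
  positivity

theorem summable_I_div_add_natCast_add_mul_I_sq (z c : ℂ) :
    Summable fun n : ℕ => I / (z + ((n : ℂ) + c) * I) ^ 2 := by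
  have hsum := (summable_int_iff_summable_nat_and_neg.mp
    (EisensteinSeries.linear_right_summable (c - I * z) 1 le_rfl)).1
  refine (hsum.mul_left (-I)).congr fun n => ?_
  have hI : z + ((n : ℂ) + c) * I = I * (1 * (c - I * z) + n) := by
    ring_nf
    rw [I_sq]
    ring
  simp only [Int.cast_one, Int.cast_natCast, zpow_ofNat, hI, mul_pow, I_sq]
  rw [div_eq_mul_inv, mul_inv, inv_neg, inv_one]
  ring

/-- For every `z ∈ ℂ` with `Re z > 0` and `Im z ≥ −1/2`, the real part of the series
extension of the logistic Cauchy transform is strictly positive. -/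
theorem logistic_extension_re_pos (z : ℂ) (hre : 0 < z.re) (him : -(1 / 2 : ℝ) ≤ z.im) :
    0 < (∑' n : ℕ, Complex.I / (z + ((n : ℂ) + 1 / 2) * Complex.I) ^ 2).re := by
  have hre_term (n : ℕ) : (z + ((n : ℂ) + 1 / 2) * I).re = z.re := by simp
  have him_term (n : ℕ) : (z + ((n : ℂ) + 1 / 2) * I).im = z.im + (n + 1 / 2) := by simp
  refine re_tsum_pos (summable_I_div_add_natCast_add_mul_I_sq z (1 / 2)) (fun n => ?_) 1 ?_
  · refine re_I_div_sq_nonneg (hre_term n ▸ hre.le) ?_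
    rw [him_term]
    linarith [n.cast_nonneg (α := ℝ)]
  · refine re_I_div_sq_pos (hre_term 1 ▸ hre) ?_
    rw [him_term]
    push_cast
    linarith
end

section
/- For every compact set I ⊂ (0, ∞) there exists a constant M > 0 such that for all t, y ∈ I and all real x with |x| ≥ 1, writing z = x + yi, one has |Γ(t + zi)·Γ(t − zi)| ≤ M·e^{−π|x|}·|x|^{2t−1}. -/
/-!
On the critical line the reflection formula gives `|Γ(1/2 + iu)|² = π / cosh(πu)`, hence
`|Γ(1/2 + iu)| ≤ √(2π) e^{-π|u|/2}`; together with `Γ(s + 1) = sΓ(s)` this bounds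
`|Γ(σ + ix)|` by `C e^{-πx/2} x^{σ - 1/2}` on the lines `σ = 1/2` and `σ = 3/2`. The Hadamard
three-lines theorem interpolates this bound across the strip `1/2 ≤ σ ≤ 3/2`, and the functional
equation propagates it to any bounded range of `σ`. Writing `z = x + iy`, the two factors of the
product are `Γ((t - y) + ix)` and `Γ((t + y) - ix)`, whose exponents add up to `2t - 1`.
-/

open Real Set ComplexConjugate

theorem Real.exp_abs_le_two_mul_cosh (u : ℝ) : Real.exp |u| ≤ 2 * Real.cosh u := by
  rw [← Real.cosh_abs, Real.cosh_eq]
  linarith [Real.exp_pos (-|u|)]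

namespace Complex

theorem norm_Gamma_one_half_add_mul_I_sq (u : ℝ) :
    ‖Gamma (1 / 2 + u * I)‖ ^ 2 = π / Real.cosh (π * u) := by
  have hconj : 1 - (1 / 2 + u * I) = conj (1 / 2 + u * I) := by
    apply Complex.ext <;> norm_num
  have hsin : sin (π * (1 / 2 + u * I)) = (Real.cosh (π * u) : ℂ) := by
    rw [show (π : ℂ) * (1 / 2 + u * I) = π / 2 + (π * u : ℝ) * I by push_cast; ring,
      sin_add_mul_I, sin_pi_div_two, cos_pi_div_two, ofReal_cosh]
    ring
  have h := Gamma_mul_Gamma_one_sub (1 / 2 + u * I)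
  rw [hconj, Gamma_conj, mul_conj, hsin, ← ofReal_div] at h
  rw [← normSq_eq_norm_sq, ← ofReal_inj.mp h]

theorem norm_Gamma_one_half_add_mul_I_le (u : ℝ) :
    ‖Gamma (1 / 2 + u * I)‖ ≤ √(2 * π) * Real.exp (-(π / 2) * |u|) := by
  rw [← pow_le_pow_iff_left₀ (norm_nonneg _) (by positivity) two_ne_zero,
    norm_Gamma_one_half_add_mul_I_sq, mul_pow, sq_sqrt (by positivity), ← Real.exp_nat_mul,
    div_le_iff₀ (Real.cosh_pos _)]
  have hcosh : Real.exp (π * |u|) ≤ 2 * Real.cosh (π * u) := by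
    simpa [abs_mul, abs_of_pos pi_pos] using exp_abs_le_two_mul_cosh (π * u)
  calc π = π * (Real.exp (-(π * |u|)) * Real.exp (π * |u|)) := by
        rw [← Real.exp_add, neg_add_cancel, Real.exp_zero, mul_one]
    _ ≤ π * (Real.exp (-(π * |u|)) * (2 * Real.cosh (π * u))) := by gcongr
    _ = _ := by push_cast; ring_nf

theorem norm_Gamma_le_Gamma_re_s18 {s : ℂ} (hs : 0 < s.re) : ‖Gamma s‖ ≤ Real.Gamma s.re := by
  rw [Gamma_eq_integral hs, Real.Gamma_eq_integral hs, GammaIntegral]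
  refine (MeasureTheory.norm_integral_le_integral_norm _).trans_eq ?_
  refine MeasureTheory.setIntegral_congr_fun measurableSet_Ioi fun t ht => ?_
  rw [norm_mul, norm_real, Real.norm_of_nonneg (Real.exp_pos _).le,
    norm_cpow_eq_rpow_re_of_pos ht, sub_re, one_re]

theorem norm_Gamma_one_half_add_add_mul_I_le (x v : ℝ) :
    ‖Gamma (1 / 2 + (x + v : ℝ) * I)‖ ≤
      √(2 * π) * Real.exp (-(π / 2) * x) * Real.exp (2 * |v|) := by
  refine (norm_Gamma_one_half_add_mul_I_le _).trans ?_
  rw [mul_assoc, ← Real.exp_add]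
  gcongr
  have : x - |v| ≤ |x + v| := by linarith [le_abs_self (x + v), neg_abs_le v]
  nlinarith [pi_pos, pi_lt_four, abs_nonneg v]

/-- On the boundary lines, `|Γ(w + ix)| ≤ C e^{-πx/2} e^{π|im w|/2}`: the Gaussian factor
`|exp (w ^ 2)| = exp (re w ^ 2 - im w ^ 2)` absorbs the growth in `im w`, while staying bounded
on the strip and at least `1` on the real axis. -/
noncomputable def gammaShiftGaussian (x : ℝ) (w : ℂ) : ℂ := Gamma (w + x * I) * exp (w ^ 2)

theorem norm_gammaShiftGaussian (x : ℝ) (w : ℂ) :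
    ‖gammaShiftGaussian x w‖ = ‖Gamma (w + x * I)‖ * Real.exp (w.re ^ 2 - w.im ^ 2) := by
  rw [gammaShiftGaussian, norm_mul, norm_exp]
  congr 2
  simp [sq]

theorem norm_gammaShiftGaussian_le_of_re_eq_one_half (x : ℝ) {w : ℂ} (hw : w.re = 1 / 2) :
    ‖gammaShiftGaussian x w‖ ≤ √(2 * π) * Real.exp 5 * Real.exp (-(π / 2) * x) := by
  have harg : w + x * I = 1 / 2 + (x + w.im : ℝ) * I := by
    apply Complex.ext <;> simp [hw, add_comm]
  rw [norm_gammaShiftGaussian, hw, harg]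
  calc _ ≤ √(2 * π) * Real.exp (-(π / 2) * x) * Real.exp (2 * |w.im|) *
        Real.exp ((1 / 2) ^ 2 - w.im ^ 2) := by
        gcongr; exact norm_Gamma_one_half_add_add_mul_I_le x w.im
    _ = √(2 * π) * Real.exp (-(π / 2) * x) * Real.exp (1 / 4 + 2 * |w.im| - w.im ^ 2) := by
        rw [mul_assoc _ (Real.exp _), ← Real.exp_add]; ring_nf
    _ ≤ _ := by
        rw [mul_right_comm]
        gcongr
        nlinarith [sq_nonneg (|w.im| - 1), sq_abs w.im]

theorem norm_gammaShiftGaussian_le_of_re_eq_three_halves {x : ℝ} (hx : 1 ≤ x) {w : ℂ}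
    (hw : w.re = 3 / 2) :
    ‖gammaShiftGaussian x w‖ ≤ √(2 * π) * Real.exp 5 * Real.exp (-(π / 2) * x) * x := by
  set s : ℂ := 1 / 2 + (x + w.im : ℝ) * I
  have hs : s ≠ 0 := fun h => by simpa [s] using congrArg re h
  have harg : w + x * I = s + 1 := by
    apply Complex.ext <;> norm_num [s, hw, add_comm]
  have hnorm_s : ‖s‖ ≤ x * Real.exp (1 / 2 + |w.im|) := by
    calc ‖s‖ ≤ |s.re| + |s.im| := norm_le_abs_re_add_abs_im s
      _ ≤ x * (3 / 2 + |w.im|) := by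
        have hre : s.re = 1 / 2 := by simp [s]
        have him : s.im = x + w.im := by simp [s]
        rw [hre, him, abs_of_pos (by norm_num : (0 : ℝ) < 1 / 2)]
        nlinarith [abs_add_le x w.im, abs_of_nonneg (by linarith : (0 : ℝ) ≤ x), abs_nonneg w.im]
      _ ≤ _ := by
        gcongr
        linarith [Real.add_one_le_exp (1 / 2 + |w.im|)]
  rw [norm_gammaShiftGaussian, hw, harg, Gamma_add_one s hs, norm_mul]
  calc _ ≤ x * Real.exp (1 / 2 + |w.im|) *
        (√(2 * π) * Real.exp (-(π / 2) * x) * Real.exp (2 * |w.im|)) *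
        Real.exp ((3 / 2) ^ 2 - w.im ^ 2) := by
        gcongr; exact norm_Gamma_one_half_add_add_mul_I_le x w.im
    _ = √(2 * π) * Real.exp (-(π / 2) * x) * x *
        Real.exp (11 / 4 + 3 * |w.im| - w.im ^ 2) := by
        have : Real.exp (11 / 4 + 3 * |w.im| - w.im ^ 2) = Real.exp (1 / 2 + |w.im|) *
            Real.exp (2 * |w.im|) * Real.exp ((3 / 2) ^ 2 - w.im ^ 2) := by
          rw [← Real.exp_add, ← Real.exp_add]; ring_nf
        rw [this]; ring
    _ ≤ _ := by
        rw [show √(2 * π) * Real.exp 5 * Real.exp (-(π / 2) * x) * x =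
          √(2 * π) * Real.exp (-(π / 2) * x) * x * Real.exp 5 by ring]
        gcongr
        nlinarith [sq_nonneg (|w.im| - 3 / 2), sq_abs w.im]

open HadamardThreeLines in
theorem bddAbove_norm_gammaShiftGaussian (x : ℝ) :
    BddAbove ((‖gammaShiftGaussian x ·‖) '' verticalClosedStrip (1 / 2) (3 / 2)) := by
  have hGamma : ContinuousOn Real.Gamma (Icc (1 / 2) (3 / 2)) := fun a ha =>
    (Real.differentiableAt_Gamma fun m => by
      linarith [ha.1, (Nat.cast_nonneg m : (0 : ℝ) ≤ m)]).continuousAt.continuousWithinAt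
  obtain ⟨B, hB⟩ := isCompact_Icc.bddAbove_image hGamma
  refine ⟨B * Real.exp ((3 / 2) ^ 2), ?_⟩
  rintro _ ⟨w, ⟨hw₁, hw₂⟩, rfl⟩
  have hre : (w + x * I).re = w.re := by simp
  show ‖gammaShiftGaussian x w‖ ≤ _
  rw [norm_gammaShiftGaussian]
  have hGamma_le : ‖Gamma (w + x * I)‖ ≤ B :=
    (hre ▸ norm_Gamma_le_Gamma_re_s18 (by linarith)).trans (hB ⟨w.re, ⟨hw₁, hw₂⟩, rfl⟩)
  have hexp_le : Real.exp (w.re ^ 2 - w.im ^ 2) ≤ Real.exp ((3 / 2) ^ 2) :=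
    Real.exp_le_exp.2 (by nlinarith [sq_nonneg w.im])
  exact mul_le_mul hGamma_le hexp_le (by positivity) ((norm_nonneg _).trans hGamma_le)

open HadamardThreeLines in
theorem diffContOnCl_gammaShiftGaussian (x : ℝ) :
    DiffContOnCl ℂ (gammaShiftGaussian x) (verticalStrip (1 / 2) (3 / 2)) := by
  refine DifferentiableOn.diffContOnCl fun w hw => ?_
  rw [verticalStrip, closure_preimage_re, closure_Ioo (by norm_num)] at hw
  have hGamma : DifferentiableAt ℂ Gamma (w + x * I) :=
    differentiableAt_Gamma _ fun m h => by
      have := congrArg re h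
      simp at this
      linarith [hw.1, (Nat.cast_nonneg m : (0 : ℝ) ≤ m)]
  exact ((hGamma.comp w ((differentiableAt_id).add_const _)).mul
    (differentiableAt_id.pow 2).cexp).differentiableWithinAt

open HadamardThreeLines in
theorem norm_Gamma_add_mul_I_le_of_mem_Icc {σ : ℝ} (hσ : σ ∈ Icc (1 / 2) (3 / 2)) {x : ℝ}
    (hx : 1 ≤ x) :
    ‖Gamma (σ + x * I)‖ ≤ √(2 * π) * Real.exp 5 * Real.exp (-(π / 2) * x) * x ^ (σ - 1 / 2) := by
  set a := √(2 * π) * Real.exp 5 * Real.exp (-(π / 2) * x)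
  have ha : 0 < a := by positivity
  have hthree := norm_le_interp_of_mem_verticalClosedStrip' (by norm_num)
    (z := σ) (by simpa [verticalClosedStrip] using hσ)
    (diffContOnCl_gammaShiftGaussian x) (bddAbove_norm_gammaShiftGaussian x)
    (fun w hw => norm_gammaShiftGaussian_le_of_re_eq_one_half x hw)
    (fun w hw => norm_gammaShiftGaussian_le_of_re_eq_three_halves hx hw)
  have hinterp : a ^ (1 - (σ - 1 / 2) / (3 / 2 - 1 / 2)) * (a * x) ^ ((σ - 1 / 2) / (3 / 2 - 1 / 2))
      = a * x ^ (σ - 1 / 2) := by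
    rw [show (3 / 2 - 1 / 2 : ℝ) = 1 by norm_num, div_one, Real.mul_rpow ha.le (by linarith),
      ← mul_assoc, ← Real.rpow_add ha, sub_add_cancel, Real.rpow_one]
  rw [ofReal_re, hinterp, norm_gammaShiftGaussian, ofReal_re, ofReal_im] at hthree
  refine le_trans ?_ hthree
  exact le_mul_of_one_le_right (norm_nonneg _) (Real.one_le_exp (by nlinarith [sq_nonneg σ]))

theorem norm_Gamma_add_one_add_mul_I (σ : ℝ) {x : ℝ} (hx : x ≠ 0) :
    ‖Gamma ((σ + 1 : ℝ) + x * I)‖ = ‖(σ : ℂ) + x * I‖ * ‖Gamma (σ + x * I)‖ := by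
  have hs : (σ : ℂ) + x * I ≠ 0 := fun h => hx (by simpa using congrArg im h)
  rw [← norm_mul, ← Gamma_add_one _ hs]
  push_cast; ring_nf

theorem norm_Gamma_add_mul_I_le_of_add_one {σ x K : ℝ} (hx : 1 ≤ x)
    (h : ‖Gamma ((σ + 1 : ℝ) + x * I)‖ ≤ K * Real.exp (-(π / 2) * x) * x ^ (σ + 1 - 1 / 2)) :
    ‖Gamma (σ + x * I)‖ ≤ K * Real.exp (-(π / 2) * x) * x ^ (σ - 1 / 2) := by
  have hx₀ : 0 < x := by linarith
  have him : x ≤ ‖(σ : ℂ) + x * I‖ := by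
    simpa [abs_of_pos hx₀] using abs_im_le_norm ((σ : ℂ) + x * I)
  rw [norm_Gamma_add_one_add_mul_I σ hx₀.ne', show σ + 1 - 1 / 2 = σ - 1 / 2 + 1 by ring,
    Real.rpow_add_one hx₀.ne'] at h
  refine le_of_mul_le_mul_left ?_ hx₀
  calc x * ‖Gamma (σ + x * I)‖ ≤ ‖(σ : ℂ) + x * I‖ * ‖Gamma (σ + x * I)‖ := by gcongr
    _ ≤ _ := h.trans_eq (by ring)

theorem norm_Gamma_add_one_add_mul_I_le {σ x K : ℝ} (hx : 1 ≤ x)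
    (h : ‖Gamma (σ + x * I)‖ ≤ K * Real.exp (-(π / 2) * x) * x ^ (σ - 1 / 2)) :
    ‖Gamma ((σ + 1 : ℝ) + x * I)‖ ≤
      (|σ| + 1) * K * Real.exp (-(π / 2) * x) * x ^ (σ + 1 - 1 / 2) := by
  have hx₀ : 0 < x := by linarith
  have hnorm : ‖(σ : ℂ) + x * I‖ ≤ (|σ| + 1) * x := by
    refine (norm_le_abs_re_add_abs_im _).trans ?_
    simp only [add_re, ofReal_re, mul_re, ofReal_im, I_re, I_im, add_im, mul_im]
    norm_num
    nlinarith [abs_of_pos hx₀, abs_nonneg σ]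
  rw [norm_Gamma_add_one_add_mul_I σ hx₀.ne', show σ + 1 - 1 / 2 = σ - 1 / 2 + 1 by ring,
    Real.rpow_add_one hx₀.ne']
  calc _ ≤ (|σ| + 1) * x * (K * Real.exp (-(π / 2) * x) * x ^ (σ - 1 / 2)) := by gcongr
    _ = _ := by ring

theorem exists_norm_Gamma_add_mul_I_le_of_mem_Icc (n : ℕ) :
    ∃ K, 0 < K ∧ ∀ σ ∈ Icc (1 / 2 - n : ℝ) (3 / 2 + n), ∀ x : ℝ, 1 ≤ x →
      ‖Gamma (σ + x * I)‖ ≤ K * Real.exp (-(π / 2) * x) * x ^ (σ - 1 / 2) := by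
  induction n with
  | zero =>
    exact ⟨√(2 * π) * Real.exp 5, by positivity, fun σ hσ x hx =>
      norm_Gamma_add_mul_I_le_of_mem_Icc (by simpa using hσ) hx⟩
  | succ n ih =>
    obtain ⟨K, hK, hbound⟩ := ih
    refine ⟨(n + 3) * K, by positivity, fun σ ⟨hσ₁, hσ₂⟩ x hx => ?_⟩
    push_cast at hσ₁ hσ₂
    have hx₀ : 0 < x := by linarith
    rcases lt_or_ge σ (1 / 2 - n) with hlow | hσ₁'
    · refine norm_Gamma_add_mul_I_le_of_add_one hx ((hbound (σ + 1) ⟨by linarith, by linarith⟩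
        x hx).trans ?_)
      gcongr
      nlinarith
    rcases le_or_gt σ (3 / 2 + n) with hσ₂' | hhigh
    · refine (hbound σ ⟨hσ₁', hσ₂'⟩ x hx).trans ?_
      gcongr
      nlinarith
    · have := norm_Gamma_add_one_add_mul_I_le hx (hbound (σ - 1) ⟨by linarith, by linarith⟩ x hx)
      rw [sub_add_cancel] at this
      refine this.trans ?_
      gcongr ?_ * _ * _ * _
      rw [abs_of_pos (by linarith)]
      linarith

theorem norm_Gamma_add_abs_mul_I (σ x : ℝ) :
    ‖Gamma (σ + |x| * I)‖ = ‖Gamma (σ + x * I)‖ := by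
  rcases abs_cases x with ⟨h, -⟩ | ⟨h, -⟩
  · rw [h]
  · rw [h, ← norm_conj, ← Gamma_conj]
    congr 2
    apply Complex.ext <;> simp

theorem exists_norm_Gamma_add_mul_I_le (R : ℝ) :
    ∃ K, 0 < K ∧ ∀ σ : ℝ, |σ| ≤ R → ∀ x : ℝ, 1 ≤ |x| →
      ‖Gamma (σ + x * I)‖ ≤ K * Real.exp (-(π / 2) * |x|) * |x| ^ (σ - 1 / 2) := by
  obtain ⟨n, hn⟩ := exists_nat_ge (R + 1)
  obtain ⟨K, hK, hbound⟩ := exists_norm_Gamma_add_mul_I_le_of_mem_Icc n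
  refine ⟨K, hK, fun σ hσ x hx => ?_⟩
  rw [← norm_Gamma_add_abs_mul_I]
  have := abs_le.1 hσ
  exact hbound σ ⟨by linarith, by linarith⟩ |x| hx

end Complex

theorem gamma_product_estimate_general (I : Set ℝ) (hI : IsCompact I) :
    ∃ M : ℝ, 0 < M ∧ ∀ t ∈ I, ∀ y ∈ I, ∀ x : ℝ, 1 ≤ |x| →
      ‖Complex.Gamma ((t : ℂ) + ((x : ℂ) + (y : ℂ) * Complex.I) * Complex.I) *
          Complex.Gamma ((t : ℂ) - ((x : ℂ) + (y : ℂ) * Complex.I) * Complex.I)‖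
        ≤ M * Real.exp (-Real.pi * |x|) * |x| ^ (2 * t - 1) := by
  obtain ⟨R, hR⟩ := hI.isBounded.subset_closedBall 0
  obtain ⟨K, hK, hbound⟩ := Complex.exists_norm_Gamma_add_mul_I_le (2 * R)
  refine ⟨K ^ 2, by positivity, fun t ht y hy x hx => ?_⟩
  have ht' : |t| ≤ R := by simpa using hR ht
  have hy' : |y| ≤ R := by simpa using hR hy
  have h₁ := hbound (t - y) ((abs_sub t y).trans (by linarith)) x hx
  have h₂ := hbound (t + y) ((abs_add_le t y).trans (by linarith)) (-x) (by rwa [abs_neg])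
  rw [abs_neg] at h₂
  have e₁ : (t : ℂ) + ((x : ℂ) + (y : ℂ) * Complex.I) * Complex.I =
      (t - y : ℝ) + x * Complex.I := by
    apply Complex.ext <;> simp [sub_eq_add_neg]
  have e₂ : (t : ℂ) - ((x : ℂ) + (y : ℂ) * Complex.I) * Complex.I =
      (t + y : ℝ) + (-x : ℝ) * Complex.I := by
    apply Complex.ext <;> simp
  rw [e₁, e₂, norm_mul]
  calc _ ≤ (K * Real.exp (-(π / 2) * |x|) * |x| ^ (t - y - 1 / 2)) *
        (K * Real.exp (-(π / 2) * |x|) * |x| ^ (t + y - 1 / 2)) :=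
        mul_le_mul h₁ h₂ (norm_nonneg _) (by positivity)
    _ = K ^ 2 * Real.exp (-(π / 2) * |x| + -(π / 2) * |x|) *
        |x| ^ ((t - y - 1 / 2) + (t + y - 1 / 2)) := by
        rw [Real.exp_add, Real.rpow_add (by linarith)]; ring
    _ = _ := by ring_nf

/-- Stirling-type estimate: for every compact set `I ⊂ (0,∞)` there is `M > 0` such that
for all `t, y ∈ I` and all real `x` with `|x| ≥ 1`, writing `z = x + yi`,
`|Γ(t + zi)·Γ(t − zi)| ≤ M·e^{−π|x|}·|x|^{2t−1}`. -/
theorem gamma_product_estimate (I : Set ℝ) (hI : IsCompact I) (hI' : I ⊆ Set.Ioi 0) :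
    ∃ M : ℝ, 0 < M ∧ ∀ t ∈ I, ∀ y ∈ I, ∀ x : ℝ, 1 ≤ |x| →
      ‖Complex.Gamma ((t : ℂ) + ((x : ℂ) + (y : ℂ) * Complex.I) * Complex.I) *
          Complex.Gamma ((t : ℂ) - ((x : ℂ) + (y : ℂ) * Complex.I) * Complex.I)‖
        ≤ M * Real.exp (-Real.pi * |x|) * |x| ^ (2 * t - 1) :=
  gamma_product_estimate_general I hI
end
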